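/- arXiv:0807.3990 — 2 statements merged into one kernel-verified Lean document; each statement's English description precedes it below -/
import Mathlib

section
/- Regard V as a vector space over the field Z(T) via the restriction of the T-action. Then A and A* are Z(T)-linear, each is diagonalizable as a Z(T)-linear endomorphism of V with the same eigenvalues θ_0,…,θ_d (resp. θ*_0,…,θ*_d) and the same eigenspaces E_0V,…,E_dV (resp. E*_0V,…,E*_dV) as over F, the conditions E_i A* E_j = 0 and E*_i A E*_j = 0 for |i − j| > 1 continue to hold, the only Z(T)-subspaces invariant under both A and A* are 0 and V, and dim_{Z(T)}(E_iV) = ρ_i/ρ for 0 ≤ i ≤ d, where ρ_i = dim_F(E_iV) and ρ = dim_F Z(T). In other words, (A; E_0,…,E_d; A*; E*_0,…,E*_d) acts on the Z(T)-vector space V as a TD system with eigenvalue sequence {θ_i}, dual eigenvalue sequence {θ*_i}, and shape {ρ_i/ρ}. -/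
/-!
Every element of `Z(T)` commutes with `A` and `A*`, so its kernel is invariant under both; by
irreducibility a nonzero element of `Z(T)` is injective. Hence `Z(T)` is a commutative domain that
is finite-dimensional over `F`, i.e. a field. `A` and `A*` commute with `Z(T)`, so they are
`Z(T)`-linear, and `A v = θ v` holds over `F` exactly when it holds over `Z(T)` with `θ` read
as `θ • 1`; the spectral decompositions `A = ∑ θ_i E_i`, `A* = ∑ θ*_i E*_i` therefore carry over
unchanged. A `Z(T)`-subspace is an `F`-subspace, which gives irreducibility, and the shape is the
tower law `dim_F E_iV = dim_F Z(T) · dim_{Z(T)} E_iV`.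
-/

/-- A tridiagonal system on `V`: `A, B` (with `B` playing the role of `A*`) are
diagonalizable, `E i` (resp. `E' i`) is the ordering of the primitive idempotents of `A`
(resp. `A*`) -- pairwise orthogonal nonzero idempotents summing to `1`, with
`A = ∑ θ i • E i` for the distinct eigenvalues `θ i` -- satisfying the tridiagonal
conditions `E i * A* * E j = 0` and `E' i * A * E' j = 0` for `|i - j| > 1`, and such that
the only subspaces invariant under both `A` and `A*` are `0` and `V`. -/
structure TDSystem (F : Type*) [Field F] (V : Type*) [AddCommGroup V] [Module F V]
    (d : ℕ) where
  A : Module.End F V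
  B : Module.End F V
  E : Fin (d + 1) → Module.End F V
  E' : Fin (d + 1) → Module.End F V
  θ : Fin (d + 1) → F
  θ' : Fin (d + 1) → F
  θ_inj : Function.Injective θ
  θ'_inj : Function.Injective θ'
  E_idem : ∀ i, E i * E i = E i
  E'_idem : ∀ i, E' i * E' i = E' i
  E_orth : ∀ i j, i ≠ j → E i * E j = 0
  E'_orth : ∀ i j, i ≠ j → E' i * E' j = 0
  E_sum : ∑ i, E i = 1
  E'_sum : ∑ i, E' i = 1
  E_ne : ∀ i, E i ≠ 0
  E'_ne : ∀ i, E' i ≠ 0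
  A_eq : A = ∑ i, θ i • E i
  B_eq : B = ∑ i, θ' i • E' i
  tri : ∀ i j : Fin (d + 1), 1 < |((i : ℕ) : ℤ) - ((j : ℕ) : ℤ)| → E i * B * E j = 0
  tri' : ∀ i j : Fin (d + 1), 1 < |((i : ℕ) : ℤ) - ((j : ℕ) : ℤ)| → E' i * A * E' j = 0
  irred : ∀ W : Submodule F V, (∀ v ∈ W, A v ∈ W) → (∀ v ∈ W, B v ∈ W) → W = ⊥ ∨ W = ⊤

variable {F : Type*} [Field F] {V : Type*} [AddCommGroup V] [Module F V] {d : ℕ}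

/-- The `F`-subalgebra `T` of `End F V` generated by `A` and `A*`. -/
def TDSystem.T (S : TDSystem F V d) : Subalgebra F (Module.End F V) :=
  Algebra.adjoin F {S.A, S.B}

/-- The center `Z(T)` of `T`: the elements of `T` commuting with everything in `T`. -/
def TDSystem.Z (S : TDSystem F V d) : Subalgebra F (Module.End F V) :=
  S.T ⊓ Subalgebra.centralizer F (S.T : Set (Module.End F V))

set_option synthInstance.maxHeartbeats 1000000
set_option maxHeartbeats 1000000

/-- `Z(T)` is commutative (its elements lie in `T` and centralize `T`). -/
instance (S : TDSystem F V d) : CommRing S.Z :=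
  { (inferInstance : Ring S.Z) with
    mul_comm := fun a b => Subtype.ext <| by
      have hb : (b : Module.End F V) ∈ Subalgebra.centralizer F (S.T : Set (Module.End F V)) :=
        b.2.2
      exact (Subalgebra.mem_centralizer_iff F).mp hb _ a.2.1 }

open Module Module.End Function

section SpectralDecomposition

variable {R ι : Type*} [Ring R] [Algebra F R] [Fintype ι] {E : ι → R}

theorem OrthogonalIdempotents.sum_smul_mul (hE : OrthogonalIdempotents E) (θ : ι → F) (i : ι) :
    (∑ j, θ j • E j) * E i = θ i • E i := by
  classical
  simp [Finset.sum_mul, hE.mul_eq]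

theorem OrthogonalIdempotents.mul_sum_smul (hE : OrthogonalIdempotents E) (θ : ι → F) (i : ι) :
    E i * (∑ j, θ j • E j) = θ i • E i := by
  classical
  simp [Finset.mul_sum, hE.mul_eq]

theorem CompleteOrthogonalIdempotents.sum_apply {E : ι → Module.End F V}
    (hE : CompleteOrthogonalIdempotents E) (v : V) : ∑ i, E i v = v := by
  simpa using congr($hE.complete v)

theorem CompleteOrthogonalIdempotents.eigenspace_sum_smul {E : ι → Module.End F V}
    (hE : CompleteOrthogonalIdempotents E) {θ : ι → F} (hθ : Injective θ) (i : ι) :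
    eigenspace (∑ j, θ j • E j) (θ i) = LinearMap.range (E i) := by
  ext v
  rw [mem_eigenspace_iff]
  constructor
  · intro hv
    have hEv : ∀ j ≠ i, E j v = 0 := fun j hji => by
      have h := congr($(hE.mul_sum_smul θ j) v)
      simp only [Module.End.mul_apply, LinearMap.smul_apply, hv, map_smul] at h
      exact (smul_right_injective V (sub_ne_zero.mpr (hθ.ne hji.symm))).eq_iff.mp
        (by rw [sub_smul, h, sub_self, smul_zero])
    refine ⟨v, ?_⟩
    calc E i v = ∑ j, E j v := (Finset.sum_eq_single i (fun j _ => hEv j) (by simp)).symm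
      _ = v := hE.sum_apply v
  · rintro ⟨w, rfl⟩
    simpa using congr($(hE.sum_smul_mul θ i) w)

theorem CompleteOrthogonalIdempotents.iSup_eigenspace_sum_smul {E : ι → Module.End F V}
    (hE : CompleteOrthogonalIdempotents E) {θ : ι → F} (hθ : Injective θ) :
    ⨆ c : F, eigenspace (∑ j, θ j • E j) c = ⊤ := by
  refine eq_top_iff.mpr fun v _ => ?_
  rw [← hE.sum_apply v]
  exact Submodule.sum_mem _ fun i _ => Submodule.mem_iSup_of_mem (θ i)
    ((hE.eigenspace_sum_smul hθ i).ge (LinearMap.mem_range_self _ _))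

end SpectralDecomposition

section ScalarTower

variable {K : Type*} [CommRing K] [Algebra F K] [Module K V] [IsScalarTower F K V]

theorem Module.End.restrictScalars_eigenspace_algebraMap (f : Module.End K V) (c : F) :
    (eigenspace f (algebraMap F K c)).restrictScalars F = eigenspace (f.restrictScalars F) c := by
  ext v
  simp [algebraMap_smul]

theorem Module.End.iSup_eigenspace_eq_top_of_restrictScalars (f : Module.End K V)
    (hf : ⨆ c : F, eigenspace (f.restrictScalars F) c = ⊤) : ⨆ μ : K, eigenspace f μ = ⊤ := by
  rw [← Submodule.restrictScalars_eq_top_iff F, Submodule.restrictScalars_iSup, eq_top_iff, ← hf]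
  exact iSup_le fun c => (restrictScalars_eigenspace_algebraMap f c).ge.trans
    (le_iSup (fun μ => (eigenspace f μ).restrictScalars F) _)

theorem CompleteOrthogonalIdempotents.restrictScalars_eigenspace_algebraMap
    {ι : Type*} [Fintype ι] {E : ι → Module.End F V} (hE : CompleteOrthogonalIdempotents E)
    {θ : ι → F} (hθ : Injective θ) {f : Module.End K V}
    (hf : f.restrictScalars F = ∑ j, θ j • E j) (i : ι) :
    (eigenspace f (algebraMap F K (θ i))).restrictScalars F = LinearMap.range (E i) := by
  rw [Module.End.restrictScalars_eigenspace_algebraMap, hf, hE.eigenspace_sum_smul hθ]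

theorem CompleteOrthogonalIdempotents.iSup_eigenspace_of_restrictScalars_eq_sum_smul
    {ι : Type*} [Fintype ι] {E : ι → Module.End F V} (hE : CompleteOrthogonalIdempotents E)
    {θ : ι → F} (hθ : Injective θ) {f : Module.End K V}
    (hf : f.restrictScalars F = ∑ j, θ j • E j) : ⨆ μ : K, eigenspace f μ = ⊤ :=
  iSup_eigenspace_eq_top_of_restrictScalars f (hf ▸ hE.iSup_eigenspace_sum_smul hθ)

end ScalarTower

def Module.End.ofCommute (Z : Subalgebra F (Module.End F V)) (f : Module.End F V)
    (hf : ∀ z ∈ Z, Commute f z) : Module.End Z V where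
  toFun := f
  map_add' := f.map_add
  map_smul' z v := congr($((hf z z.2).eq) v)

namespace TDSystem

variable (S : TDSystem F V d)

theorem completeOrthogonalIdempotents_E : CompleteOrthogonalIdempotents S.E :=
  ⟨⟨S.E_idem, S.E_orth⟩, S.E_sum⟩

theorem completeOrthogonalIdempotents_E' : CompleteOrthogonalIdempotents S.E' :=
  ⟨⟨S.E'_idem, S.E'_orth⟩, S.E'_sum⟩

theorem A_mem_T : S.A ∈ S.T := Algebra.subset_adjoin (Set.mem_insert _ _)

theorem B_mem_T : S.B ∈ S.T := Algebra.subset_adjoin (Set.mem_insert_of_mem _ rfl)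

theorem commute_of_mem_T_of_mem_Z {t z : Module.End F V} (ht : t ∈ S.T) (hz : z ∈ S.Z) :
    Commute t z :=
  (Subalgebra.mem_centralizer_iff F).mp hz.2 t ht

theorem irred_of_isScalarTower {K : Type*} [Semiring K] [Module K V] [SMul F K]
    [IsScalarTower F K V] (W : Submodule K V) (hA : ∀ v ∈ W, S.A v ∈ W)
    (hB : ∀ v ∈ W, S.B v ∈ W) : W = ⊥ ∨ W = ⊤ := by
  simpa only [Submodule.restrictScalars_eq_bot_iff, Submodule.restrictScalars_eq_top_iff] using
    S.irred (W.restrictScalars F) hA hB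

theorem injective_of_commute {f : Module.End F V} (hA : Commute S.A f) (hB : Commute S.B f)
    (hf : f ≠ 0) : Injective f := by
  have invariant {g : Module.End F V} (hg : Commute g f) :
      ∀ v ∈ LinearMap.ker f, g v ∈ LinearMap.ker f := fun v hv => by
    rw [LinearMap.mem_ker, ← Module.End.mul_apply, ← hg.eq, Module.End.mul_apply,
      LinearMap.mem_ker.mp hv, map_zero]
  rcases S.irred _ (invariant hA) (invariant hB) with h | h
  · exact LinearMap.ker_eq_bot.mp h
  · exact absurd (LinearMap.ker_eq_top.mp h) hf

instance : Nontrivial S.Z :=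
  have : Nontrivial (Module.End F V) := nontrivial_of_ne _ _ (S.E_ne 0)
  inferInstance

theorem injective_of_mem_Z {z : Module.End F V} (hz : z ∈ S.Z) (h0 : z ≠ 0) : Injective z :=
  S.injective_of_commute (S.commute_of_mem_T_of_mem_Z S.A_mem_T hz)
    (S.commute_of_mem_T_of_mem_Z S.B_mem_T hz) h0

instance : IsDomain S.Z :=
  have : NoZeroDivisors S.Z := ⟨fun {a b} hab => or_iff_not_imp_left.mpr fun ha =>
    Subtype.ext <| LinearMap.ext fun v => S.injective_of_mem_Z a.2 (by simpa using ha)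
      (by simpa using congr(($hab : Module.End F V) v))⟩
  NoZeroDivisors.to_isDomain _

theorem isField_Z [FiniteDimensional F V] : IsField S.Z :=
  have : IsArtinianRing S.Z := .of_finite F S.Z
  IsArtinianRing.isField_of_isDomain S.Z

end TDSystem

theorem sharpen_tdp_stmt5_general [FiniteDimensional F V] (S : TDSystem F V d) :
    ∃ A' B' : Module.End S.Z V,
      (∀ v : V, A' v = S.A v) ∧
      (∀ v : V, B' v = S.B v) ∧
      (⨆ μ : S.Z, Module.End.eigenspace A' μ) = ⊤ ∧
      (⨆ μ : S.Z, Module.End.eigenspace B' μ) = ⊤ ∧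
      (∀ i : Fin (d + 1),
        (Module.End.eigenspace A' (algebraMap F S.Z (S.θ i)) : Set V) = Set.range (S.E i)) ∧
      (∀ i : Fin (d + 1),
        (Module.End.eigenspace B' (algebraMap F S.Z (S.θ' i)) : Set V) = Set.range (S.E' i)) ∧
      (∀ i j : Fin (d + 1), 1 < |((i : ℕ) : ℤ) - ((j : ℕ) : ℤ)| → S.E i * S.B * S.E j = 0) ∧
      (∀ i j : Fin (d + 1), 1 < |((i : ℕ) : ℤ) - ((j : ℕ) : ℤ)| → S.E' i * S.A * S.E' j = 0) ∧
      (∀ W : Submodule S.Z V,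
        (∀ v ∈ W, S.A v ∈ W) → (∀ v ∈ W, S.B v ∈ W) → W = ⊥ ∨ W = ⊤) ∧
      (∀ i : Fin (d + 1),
        Module.finrank F S.Z *
            Module.finrank S.Z (Module.End.eigenspace A' (algebraMap F S.Z (S.θ i))) =
          Module.finrank F (LinearMap.range (S.E i))) := by
  let : Field S.Z := S.isField_Z.toField
  let A' := ofCommute S.Z S.A fun _ => S.commute_of_mem_T_of_mem_Z S.A_mem_T
  let B' := ofCommute S.Z S.B fun _ => S.commute_of_mem_T_of_mem_Z S.B_mem_T
  -- `A'.restrictScalars F` is `S.A` by definition, so `S.A_eq` decomposes `A'`.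
  have hA := S.completeOrthogonalIdempotents_E.restrictScalars_eigenspace_algebraMap S.θ_inj
    (f := A') S.A_eq
  have hB := S.completeOrthogonalIdempotents_E'.restrictScalars_eigenspace_algebraMap S.θ'_inj
    (f := B') S.B_eq
  refine ⟨A', B', fun _ => rfl, fun _ => rfl,
    S.completeOrthogonalIdempotents_E.iSup_eigenspace_of_restrictScalars_eq_sum_smul S.θ_inj
      S.A_eq,
    S.completeOrthogonalIdempotents_E'.iSup_eigenspace_of_restrictScalars_eq_sum_smul S.θ'_inj
      S.B_eq,
    fun i => by rw [← LinearMap.coe_range, ← hA i]; rfl,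
    fun i => by rw [← LinearMap.coe_range, ← hB i]; rfl,
    S.tri, S.tri', S.irred_of_isScalarTower, fun i => ?_⟩
  rw [← hA i]
  exact finrank_mul_finrank F S.Z (eigenspace A' (algebraMap F S.Z (S.θ i)))

/-- Regard `V` as a vector space over `Z(T)` via restriction of the `T`-action.  Then
`A` and `A*` are `Z(T)`-linear (they induce `Z(T)`-endomorphisms `A'`, `B'` of `V`),
each is diagonalizable over `Z(T)` with the same eigenvalues `θ i` (resp. `θ' i`) and
the same eigenspaces `E i V` (resp. `E' i V`) as over `F`, the tridiagonal relations
continue to hold, the only `Z(T)`-subspaces invariant under both `A` and `A*` are `0`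
and `V`, and `dim_F Z(T) · dim_{Z(T)}(E i V) = ρ_i` where `ρ_i = dim_F (E i V)`;
i.e. `(A; E i; A*; E' i)` acts on the `Z(T)`-vector space `V` as a TD system with
eigenvalue sequence `θ`, dual eigenvalue sequence `θ'` and shape `ρ_i / ρ`. -/
theorem sharpen_tdp_stmt5 [FiniteDimensional F V] [Nontrivial V] (S : TDSystem F V d) :
    ∃ A' B' : Module.End S.Z V,
      (∀ v : V, A' v = S.A v) ∧
      (∀ v : V, B' v = S.B v) ∧
      (⨆ μ : S.Z, Module.End.eigenspace A' μ) = ⊤ ∧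
      (⨆ μ : S.Z, Module.End.eigenspace B' μ) = ⊤ ∧
      (∀ i : Fin (d + 1),
        (Module.End.eigenspace A' (algebraMap F S.Z (S.θ i)) : Set V) = Set.range (S.E i)) ∧
      (∀ i : Fin (d + 1),
        (Module.End.eigenspace B' (algebraMap F S.Z (S.θ' i)) : Set V) = Set.range (S.E' i)) ∧
      (∀ i j : Fin (d + 1), 1 < |((i : ℕ) : ℤ) - ((j : ℕ) : ℤ)| → S.E i * S.B * S.E j = 0) ∧
      (∀ i j : Fin (d + 1), 1 < |((i : ℕ) : ℤ) - ((j : ℕ) : ℤ)| → S.E' i * S.A * S.E' j = 0) ∧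
      (∀ W : Submodule S.Z V,
        (∀ v ∈ W, S.A v ∈ W) → (∀ v ∈ W, S.B v ∈ W) → W = ⊥ ∨ W = ⊤) ∧
      (∀ i : Fin (d + 1),
        Module.finrank F S.Z *
            Module.finrank S.Z (Module.End.eigenspace A' (algebraMap F S.Z (S.θ i))) =
          Module.finrank F (LinearMap.range (S.E i))) :=
  sharpen_tdp_stmt5_general S
end

section
/- Regard TE*_0 = {t E*_0 : t ∈ T} as a right vector space and E*_0T = {E*_0 t : t ∈ T} as a left vector space over the field E*_0TE*_0, and define the E*_0TE*_0-bilinear form ( , ) : E*_0T × TE*_0 → E*_0TE*_0 by (r, s) = rs. Then this bilinear form is nondegenerate: if r ∈ E*_0T satisfies rs = 0 for all s ∈ TE*_0 then r = 0, and if s ∈ TE*_0 satisfies rs = 0 for all r ∈ E*_0T then s = 0. -/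
variable {F : Type*} [Field F] {V : Type*} [AddCommGroup V] [Module F V] {d : ℕ}

/-- Auxiliary: for `x ≠ 0`, the span of `{u (x v) : u ∈ T, v ∈ V}` is all of `V`. -/
lemma TDSystem.span_aux (S : TDSystem F V d) {x : Module.End F V} (hx : x ≠ 0) :
    Submodule.span F {w : V | ∃ u ∈ S.T, ∃ v : V, u (x v) = w} = ⊤ := by
  set G : Set V := {w : V | ∃ u ∈ S.T, ∃ v : V, u (x v) = w} with hG
  have hA : S.A ∈ S.T := Algebra.subset_adjoin (by simp)
  have hB : S.B ∈ S.T := Algebra.subset_adjoin (by simp)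
  have inv : ∀ f : Module.End F V, f ∈ S.T →
      ∀ v ∈ Submodule.span F G, f v ∈ Submodule.span F G := by
    intro f hf v hv
    have : Submodule.map f (Submodule.span F G) ≤ Submodule.span F G := by
      rw [Submodule.map_span]
      apply Submodule.span_mono
      rintro _ ⟨w, ⟨u, hu, v', rfl⟩, rfl⟩
      exact ⟨f * u, mul_mem hf hu, v', rfl⟩
    exact this ⟨v, hv, rfl⟩
  rcases S.irred (Submodule.span F G) (inv S.A hA) (inv S.B hB) with h | h
  · exfalso
    obtain ⟨v, hv⟩ : ∃ v : V, x v ≠ 0 := by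
      by_contra hc
      push_neg at hc
      exact hx (LinearMap.ext fun v => by simpa using hc v)
    have hmem : x v ∈ Submodule.span F G :=
      Submodule.subset_span ⟨1, one_mem _, v, by simp⟩
    rw [h] at hmem
    exact hv (by simpa using hmem)
  · exact h

/-- The `E'₀ T E'₀`-bilinear form `(r, s) ↦ r * s` on `E'₀ T × T E'₀` is nondegenerate:
if `r ∈ E'₀ T` satisfies `r * s = 0` for all `s ∈ T E'₀` then `r = 0`, and if
`s ∈ T E'₀` satisfies `r * s = 0` for all `r ∈ E'₀ T` then `s = 0`. -/
theorem sharpen_tdp_stmt12 [FiniteDimensional F V] [Nontrivial V] (S : TDSystem F V d) :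
    (∀ r : Module.End F V, (∃ t ∈ S.T, r = S.E' 0 * t) →
      (∀ s : Module.End F V, (∃ t ∈ S.T, s = t * S.E' 0) → r * s = 0) → r = 0) ∧
    (∀ s : Module.End F V, (∃ t ∈ S.T, s = t * S.E' 0) →
      (∀ r : Module.End F V, (∃ t ∈ S.T, r = S.E' 0 * t) → r * s = 0) → s = 0) := by
  constructor
  · rintro r ⟨t, ht, rfl⟩ h
    have hspan := S.span_aux (S.E'_ne 0)
    have hle : Submodule.span F {w : V | ∃ u ∈ S.T, ∃ v : V, u (S.E' 0 v) = w}
        ≤ LinearMap.ker (S.E' 0 * t) := by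
      rw [Submodule.span_le]
      rintro _ ⟨u, hu, v, rfl⟩
      have h0 : (S.E' 0 * t) * (u * S.E' 0) = 0 := h _ ⟨u, hu, rfl⟩
      have := congrArg (fun f : Module.End F V => f v) h0
      simpa [Module.End.mul_apply] using this
    rw [hspan] at hle
    ext v
    simpa using hle (Submodule.mem_top (x := v))
  · rintro s ⟨t, ht, rfl⟩ h
    by_contra hs
    have hspan := S.span_aux hs
    have hle : Submodule.span F {w : V | ∃ u ∈ S.T, ∃ v : V, u ((t * S.E' 0) v) = w}
        ≤ LinearMap.ker (S.E' 0) := by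
      rw [Submodule.span_le]
      rintro _ ⟨u, hu, v, rfl⟩
      have h0 : (S.E' 0 * u) * (t * S.E' 0) = 0 := h _ ⟨u, hu, rfl⟩
      have := congrArg (fun f : Module.End F V => f v) h0
      simpa [Module.End.mul_apply] using this
    rw [hspan] at hle
    exact S.E'_ne 0 (LinearMap.ext fun v => by
      simpa using hle (Submodule.mem_top (x := v)))
end
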